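/- arXiv:1207.2874 — 6 statements merged into one kernel-verified Lean document; each statement's English description precedes it below -/
import Mathlib

section
/- Let a and b be linear operators on ℂ² satisfying ab + ba = 1, a² = 0, b² = 0, let φ₀ ≠ 0 satisfy aφ₀ = 0 and Ψ₀ ≠ 0 satisfy b*Ψ₀ = 0. Then ⟨φ₀, Ψ₀⟩ ≠ 0; consequently the vacua can always be normalized so that ⟨φ₀, Ψ₀⟩ = 1. -/
open Matrix
open scoped InnerProductSpace ComplexOrder

noncomputable section

/-- Action of a 2×2 complex matrix (an operator) on a vector of ℂ². -/
def act (A : Matrix (Fin 2) (Fin 2) ℂ) (x : EuclideanSpace ℂ (Fin 2)) :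
    EuclideanSpace ℂ (Fin 2) := WithLp.toLp 2 (A.mulVec x)

/-!
If `a φ₀ = 0` then `a (b φ₀) = φ₀` by the anticommutation rule, so `φ₀, b φ₀` is a basis of the
two-dimensional space. Both vectors are orthogonal to `Ψ₀` when `⟪φ₀, Ψ₀⟫ = 0`, since
`⟪b φ₀, Ψ₀⟫ = ⟪φ₀, b* Ψ₀⟫ = 0`; hence `Ψ₀ = 0`.
-/

theorem ContinuousLinearMap.apply_apply_eq_self_of_anticomm {R M : Type*} [Semiring R]
    [TopologicalSpace M] [AddCommMonoid M] [Module R M] [ContinuousAdd M] {a b : M →L[R] M}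
    (hab : a * b + b * a = 1) {x : M} (hx : a x = 0) : a (b x) = x := by
  simpa [hx] using congr($hab x)

theorem linearIndependent_pair_of_apply_eq_zero_of_apply_eq {K V F : Type*} [DivisionRing K]
    [AddCommGroup V] [Module K V] [FunLike F V V] [LinearMapClass F K V V] (f : F) {x y : V} (hx : x ≠ 0)
    (hfx : f x = 0) (hfy : f y = x) : LinearIndependent K ![x, y] := by
  rw [linearIndependent_fin2]
  simp only [Matrix.cons_val_one, Matrix.cons_val_zero]
  refine ⟨fun hy ↦ hx ?_, fun c hc ↦ hx ?_⟩
  · rw [← hfy, hy, map_zero]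
  · have hcx : c • x = 0 := by rw [← hfy, ← map_smul, hc, hfx]
    rcases smul_eq_zero.mp hcx with rfl | h
    · rw [← hc, zero_smul]
    · exact h

theorem eq_zero_of_forall_inner_eq_zero_of_linearIndependent {𝕜 E ι : Type*} [RCLike 𝕜]
    [NormedAddCommGroup E] [InnerProductSpace 𝕜 E] [Fintype ι] [Nonempty ι] {v : ι → E}
    (hv : LinearIndependent 𝕜 v) (hcard : Fintype.card ι = Module.finrank 𝕜 E) {y : E}
    (hy : ∀ i, ⟪v i, y⟫_𝕜 = 0) : y = 0 :=
  InnerProductSpace.ext_inner_left_basis (basisOfLinearIndependentOfCardEqFinrank hv hcard)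
    fun i ↦ by simpa using hy i

theorem inner_ne_zero_of_anticomm {𝕜 E : Type*} [RCLike 𝕜] [NormedAddCommGroup E]
    [InnerProductSpace 𝕜 E] [CompleteSpace E] (hE : Module.finrank 𝕜 E = 2)
    {a b : E →L[𝕜] E} (hab : a * b + b * a = 1) {φ Ψ : E} (hφ : φ ≠ 0) (hΨ : Ψ ≠ 0)
    (haφ : a φ = 0) (hbΨ : ContinuousLinearMap.adjoint b Ψ = 0) : ⟪φ, Ψ⟫_𝕜 ≠ 0 := by
  intro hφΨ
  have hbφΨ : ⟪b φ, Ψ⟫_𝕜 = 0 := by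
    rw [← ContinuousLinearMap.adjoint_inner_right, hbΨ, inner_zero_right]
  have hind := linearIndependent_pair_of_apply_eq_zero_of_apply_eq a hφ haφ
    (a.apply_apply_eq_self_of_anticomm hab haφ)
  refine hΨ (eq_zero_of_forall_inner_eq_zero_of_linearIndependent hind (by simp [hE]) ?_)
  intro i
  fin_cases i
  exacts [hφΨ, hbφΨ]

theorem act_eq_toEuclideanCLM (A : Matrix (Fin 2) (Fin 2) ℂ) (x : EuclideanSpace ℂ (Fin 2)) :
    act A x = toEuclideanCLM (n := Fin 2) (𝕜 := ℂ) A x :=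
  rfl

theorem stmt2_general (a b : Matrix (Fin 2) (Fin 2) ℂ)
    (hab : a * b + b * a = 1)
    (φ₀ Ψ₀ : EuclideanSpace ℂ (Fin 2)) (hφ₀ : φ₀ ≠ 0) (hΨ₀ : Ψ₀ ≠ 0)
    (hvacφ : act a φ₀ = 0) (hvacΨ : act bᴴ Ψ₀ = 0) :
    ⟪φ₀, Ψ₀⟫_ℂ ≠ 0 ∧
    ∃ φ₀' Ψ₀' : EuclideanSpace ℂ (Fin 2), (∃ k : ℂ, k ≠ 0 ∧ φ₀' = k • φ₀) ∧
      (∃ k' : ℂ, k' ≠ 0 ∧ Ψ₀' = k' • Ψ₀) ∧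
      act a φ₀' = 0 ∧ act bᴴ Ψ₀' = 0 ∧ ⟪φ₀', Ψ₀'⟫_ℂ = 1 := by
  set T := toEuclideanCLM (n := Fin 2) (𝕜 := ℂ)
  have hab' : T a * T b + T b * T a = 1 := by
    rw [← map_mul, ← map_mul, ← map_add, hab, map_one]
  have hvacΨ' : ContinuousLinearMap.adjoint (T b) Ψ₀ = 0 := by
    rwa [← ContinuousLinearMap.star_eq_adjoint, ← map_star]
  have hinner : ⟪φ₀, Ψ₀⟫_ℂ ≠ 0 :=
    inner_ne_zero_of_anticomm finrank_euclideanSpace_fin hab' hφ₀ hΨ₀ hvacφ hvacΨ'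
  refine ⟨hinner, φ₀, (⟪φ₀, Ψ₀⟫_ℂ)⁻¹ • Ψ₀, ⟨1, one_ne_zero, (one_smul _ _).symm⟩,
    ⟨(⟪φ₀, Ψ₀⟫_ℂ)⁻¹, inv_ne_zero hinner, rfl⟩, hvacφ, ?_, ?_⟩
  · rw [act_eq_toEuclideanCLM, map_smul, ← act_eq_toEuclideanCLM, hvacΨ, smul_zero]
  · rw [inner_smul_right, inv_mul_cancel₀ hinner]

/-- For a pseudo-fermion pair with nonzero vacua `a φ₀ = 0`, `b* Ψ₀ = 0`,
one has `⟨φ₀, Ψ₀⟩ ≠ 0`; consequently the vacua can be normalized so that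
`⟨φ₀, Ψ₀⟩ = 1`. -/
theorem stmt2 (a b : Matrix (Fin 2) (Fin 2) ℂ)
    (hab : a * b + b * a = 1) (ha2 : a * a = 0) (hb2 : b * b = 0)
    (φ₀ Ψ₀ : EuclideanSpace ℂ (Fin 2)) (hφ₀ : φ₀ ≠ 0) (hΨ₀ : Ψ₀ ≠ 0)
    (hvacφ : act a φ₀ = 0) (hvacΨ : act bᴴ Ψ₀ = 0) :
    ⟪φ₀, Ψ₀⟫_ℂ ≠ 0 ∧
    ∃ φ₀' Ψ₀' : EuclideanSpace ℂ (Fin 2), (∃ k : ℂ, k ≠ 0 ∧ φ₀' = k • φ₀) ∧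
      (∃ k' : ℂ, k' ≠ 0 ∧ Ψ₀' = k' • Ψ₀) ∧
      act a φ₀' = 0 ∧ act bᴴ Ψ₀' = 0 ∧ ⟪φ₀', Ψ₀'⟫_ℂ = 1 :=
  stmt2_general a b hab φ₀ Ψ₀ hφ₀ hΨ₀ hvacφ hvacΨ
end
end

section
/- Let a and b be linear operators on ℂ² satisfying ab + ba = 1, a² = 0, b² = 0, let φ₀ ≠ 0 satisfy aφ₀ = 0 and Ψ₀ ≠ 0 satisfy b*Ψ₀ = 0, and set φ₁ := bφ₀, Ψ₁ := a*Ψ₀. Then {φ₀, φ₁} is linearly independent and hence a basis of ℂ², and likewise {Ψ₀, Ψ₁} is a basis of ℂ². -/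
open Matrix
open scoped InnerProductSpace ComplexOrder

noncomputable section

theorem linearIndependent_pair_of_map_eq {R M : Type*} [Ring R] [AddCommGroup M] [Module R M]
    [IsCancelMulZero R] [Module.IsTorsionFree R M] (f : M →ₗ[R] M) {v w : M} (hv : v ≠ 0)
    (hfv : f v = 0) (hfw : f w = v) : LinearIndependent R ![v, w] := by
  rw [LinearIndependent.pair_iff]
  intro s t hst
  have ht : t = 0 := by
    have htv : t • v = 0 := by simpa [hfv, hfw] using congrArg f hst
    exact (smul_eq_zero_iff_left hv).mp htv
  subst ht
  have hsv : s • v = 0 := by simpa using hst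
  exact ⟨(smul_eq_zero_iff_left hv).mp hsv, rfl⟩

theorem LinearIndependent.span_pair_eq_top {K V : Type*} [DivisionRing K] [AddCommGroup V]
    [Module K V] {v w : V} (h : LinearIndependent K ![v, w]) (hV : Module.finrank K V = 2) :
    Submodule.span K {v, w} = ⊤ := by
  rw [← Matrix.range_cons_cons_empty v w ![]]
  exact h.span_eq_top_of_card_eq_finrank (by simp [hV])

theorem act_eq_toLpLin (A : Matrix (Fin 2) (Fin 2) ℂ) (x : EuclideanSpace ℂ (Fin 2)) :
    act A x = Matrix.toLpLin 2 2 A x := by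
  simp [act, Matrix.toLpLin_apply]

theorem act_act (A B : Matrix (Fin 2) (Fin 2) ℂ) (x : EuclideanSpace ℂ (Fin 2)) :
    act A (act B x) = act (A * B) x := by
  simp only [act, WithLp.ofLp_toLp, Matrix.mulVec_mulVec]

theorem act_act_of_anticomm_of_act_eq_zero {a b : Matrix (Fin 2) (Fin 2) ℂ}
    (hab : a * b + b * a = 1) {φ : EuclideanSpace ℂ (Fin 2)} (hφ : act a φ = 0) :
    act a (act b φ) = φ := by
  have hφ' : a *ᵥ φ.ofLp = 0 := congrArg WithLp.ofLp hφ
  rw [act_act, eq_sub_of_add_eq hab]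
  simp [act, Matrix.sub_mulVec, ← Matrix.mulVec_mulVec, hφ']

theorem linearIndependent_and_span_eq_top_of_anticomm {a b : Matrix (Fin 2) (Fin 2) ℂ}
    (hab : a * b + b * a = 1) {φ : EuclideanSpace ℂ (Fin 2)} (hφ : φ ≠ 0) (hvac : act a φ = 0) :
    LinearIndependent ℂ ![φ, act b φ] ∧ Submodule.span ℂ {φ, act b φ} = ⊤ := by
  have hli : LinearIndependent ℂ ![φ, act b φ] := by
    refine linearIndependent_pair_of_map_eq (Matrix.toLpLin 2 2 a) hφ ?_ ?_
    · rw [← act_eq_toLpLin, hvac]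
    · rw [← act_eq_toLpLin, act_act_of_anticomm_of_act_eq_zero hab hvac]
  exact ⟨hli, hli.span_pair_eq_top finrank_euclideanSpace_fin⟩

theorem stmt4_general (a b : Matrix (Fin 2) (Fin 2) ℂ)
    (hab : a * b + b * a = 1)
    (φ₀ Ψ₀ : EuclideanSpace ℂ (Fin 2)) (hφ₀ : φ₀ ≠ 0) (hΨ₀ : Ψ₀ ≠ 0)
    (hvacφ : act a φ₀ = 0) (hvacΨ : act bᴴ Ψ₀ = 0) :
    LinearIndependent ℂ ![φ₀, act b φ₀] ∧
    Submodule.span ℂ {φ₀, act b φ₀} = ⊤ ∧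
    LinearIndependent ℂ ![Ψ₀, act aᴴ Ψ₀] ∧
    Submodule.span ℂ {Ψ₀, act aᴴ Ψ₀} = ⊤ := by
  have hab_conj : bᴴ * aᴴ + aᴴ * bᴴ = 1 := by
    simpa [Matrix.conjTranspose_mul, add_comm] using congrArg Matrix.conjTranspose hab
  obtain ⟨hφli, hφspan⟩ := linearIndependent_and_span_eq_top_of_anticomm hab hφ₀ hvacφ
  obtain ⟨hΨli, hΨspan⟩ := linearIndependent_and_span_eq_top_of_anticomm hab_conj hΨ₀ hvacΨ
  exact ⟨hφli, hφspan, hΨli, hΨspan⟩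

/-- The families `{φ₀, φ₁}` and `{Ψ₀, Ψ₁}` are linearly independent and
hence bases of ℂ². -/
theorem stmt4 (a b : Matrix (Fin 2) (Fin 2) ℂ)
    (hab : a * b + b * a = 1) (ha2 : a * a = 0) (hb2 : b * b = 0)
    (φ₀ Ψ₀ : EuclideanSpace ℂ (Fin 2)) (hφ₀ : φ₀ ≠ 0) (hΨ₀ : Ψ₀ ≠ 0)
    (hvacφ : act a φ₀ = 0) (hvacΨ : act bᴴ Ψ₀ = 0) :
    LinearIndependent ℂ ![φ₀, act b φ₀] ∧
    Submodule.span ℂ {φ₀, act b φ₀} = ⊤ ∧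
    LinearIndependent ℂ ![Ψ₀, act aᴴ Ψ₀] ∧
    Submodule.span ℂ {Ψ₀, act aᴴ Ψ₀} = ⊤ :=
  stmt4_general a b hab φ₀ Ψ₀ hφ₀ hΨ₀ hvacφ hvacΨ
end
end

section
/- Let a and b be linear operators on ℂ² satisfying ab + ba = 1, a² = 0, b² = 0, let φ₀ satisfy aφ₀ = 0 and Ψ₀ satisfy b*Ψ₀ = 0 with ⟨φ₀, Ψ₀⟩ = 1, set φ₁ := bφ₀, Ψ₁ := a*Ψ₀, and define S_φ f := ⟨φ₀,f⟩φ₀ + ⟨φ₁,f⟩φ₁ and S_Ψ f := ⟨Ψ₀,f⟩Ψ₀ + ⟨Ψ₁,f⟩Ψ₁. Then S_φ and S_Ψ are self-adjoint, strictly positive (positive definite, hence invertible), and their operator norms satisfy ‖S_φ‖ ≤ ‖φ₀‖² + ‖φ₁‖² and ‖S_Ψ‖ ≤ ‖Ψ₀‖² + ‖Ψ₁‖². -/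
open Matrix
open scoped InnerProductSpace ComplexOrder

noncomputable section

lemma act_clm (A : Matrix (Fin 2) (Fin 2) ℂ) (x : EuclideanSpace ℂ (Fin 2)) :
    Matrix.toEuclideanCLM (𝕜 := ℂ) A x = act A x := rfl

lemma inner_act (A : Matrix (Fin 2) (Fin 2) ℂ) (x y : EuclideanSpace ℂ (Fin 2)) :
    ⟪x, act A y⟫_ℂ = ⟪act Aᴴ x, y⟫_ℂ := by
  show dotProduct (A *ᵥ y) (star (x : Fin 2 → ℂ)) =
    dotProduct (y : Fin 2 → ℂ) (star (Aᴴ *ᵥ (x : Fin 2 → ℂ)))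
  rw [dotProduct_comm, dotProduct_comm (y : Fin 2 → ℂ)]
  rw [dotProduct_mulVec, star_mulVec, conjTranspose_conjTranspose]

lemma inner_act' (A : Matrix (Fin 2) (Fin 2) ℂ) (x y : EuclideanSpace ℂ (Fin 2)) :
    ⟪act A x, y⟫_ℂ = ⟪x, act Aᴴ y⟫_ℂ := by
  rw [inner_act, conjTranspose_conjTranspose]

lemma act_mul (A B : Matrix (Fin 2) (Fin 2) ℂ) (x : EuclideanSpace ℂ (Fin 2)) :
    act (A * B) x = act A (act B x) := by
  simp only [act, WithLp.ofLp_toLp, Matrix.mulVec_mulVec]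

lemma key (u₀ u₁ v₀ v₁ : EuclideanSpace ℂ (Fin 2)) (S : Matrix (Fin 2) (Fin 2) ℂ)
    (h00 : ⟪v₀, u₀⟫_ℂ = 1) (h01 : ⟪v₀, u₁⟫_ℂ = 0)
    (h10 : ⟪v₁, u₀⟫_ℂ = 0) (h11 : ⟪v₁, u₁⟫_ℂ = 1)
    (hS : ∀ f, act S f = ⟪u₀, f⟫_ℂ • u₀ + ⟪u₁, f⟫_ℂ • u₁) :
    S.PosDef ∧ IsUnit S ∧
      ‖Matrix.toEuclideanCLM (𝕜 := ℂ) S‖ ≤ ‖u₀‖ ^ 2 + ‖u₁‖ ^ 2 := by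
  have hentry : ∀ i j, S i j =
      u₀ i * starRingEnd ℂ (u₀ j) + u₁ i * starRingEnd ℂ (u₁ j) := by
    intro i j
    have h := congrArg (fun v : EuclideanSpace ℂ (Fin 2) => v i)
      (hS (EuclideanSpace.single j 1))
    simp only [act, EuclideanSpace.inner_single_right, one_mul, PiLp.add_apply,
      PiLp.smul_apply, smul_eq_mul] at h
    have hm : (S *ᵥ (EuclideanSpace.single j (1:ℂ) : Fin 2 → ℂ)) i = S i j := by
      fin_cases j <;>
        simp [Matrix.mulVec, dotProduct, EuclideanSpace.single_apply,
          Fin.sum_univ_two]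
    rw [hm] at h
    rw [h]; ring
  set M : Matrix (Fin 2) (Fin 2) ℂ :=
    Matrix.of (fun i j => ![(u₀ : Fin 2 → ℂ), (u₁ : Fin 2 → ℂ)] j i) with hMdef
  set N : Matrix (Fin 2) (Fin 2) ℂ :=
    Matrix.of (fun i j => ![(v₀ : Fin 2 → ℂ), (v₁ : Fin 2 → ℂ)] j i) with hNdef
  have hM : S = M * Mᴴ := by
    ext i j
    simp [Matrix.mul_apply, Fin.sum_univ_two, Matrix.conjTranspose_apply, hMdef,
      hentry i j]
  have hNM : Nᴴ * M = 1 := by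
    have e00 := h00; have e01 := h01; have e10 := h10; have e11 := h11
    simp only [PiLp.inner_apply, RCLike.inner_apply, Fin.sum_univ_two] at e00 e01 e10 e11
    ext i j
    fin_cases i <;> fin_cases j <;>
      simp [Matrix.mul_apply, Fin.sum_univ_two, Matrix.conjTranspose_apply, hMdef,
        hNdef, Matrix.one_apply] <;>
      first
        | linear_combination e00
        | linear_combination e01
        | linear_combination e10
        | linear_combination e11
  haveI : Invertible M := invertibleOfLeftInverse _ _ hNM
  have hposdef : S.PosDef := by
    refine posDef_iff_dotProduct_mulVec.mpr ⟨hM ▸ isHermitian_mul_conjTranspose_self M, fun x hx => ?_⟩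
    have hrw : dotProduct (star x) (S *ᵥ x)
        = dotProduct (star (Mᴴ *ᵥ x)) (Mᴴ *ᵥ x) := by
      rw [hM, ← mulVec_mulVec, dotProduct_mulVec, star_mulVec,
        conjTranspose_conjTranspose]
    rw [hrw]
    refine dotProduct_star_self_pos_iff.mpr fun h0 => hx ?_
    have := Matrix.mulVec_injective_of_invertible Mᴴ
    exact this (by simpa using h0)
  refine ⟨hposdef, hposdef.isUnit, ?_⟩
  refine ContinuousLinearMap.opNorm_le_bound _ (by positivity) fun f => ?_
  rw [act_clm, hS f]
  have h1 : ‖⟪u₀, f⟫_ℂ • u₀ + ⟪u₁, f⟫_ℂ • u₁‖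
      ≤ ‖⟪u₀, f⟫_ℂ‖ * ‖u₀‖ + ‖⟪u₁, f⟫_ℂ‖ * ‖u₁‖ := by
    refine (norm_add_le _ _).trans ?_
    simp [norm_smul]
  have h2 : ‖⟪u₀, f⟫_ℂ‖ ≤ ‖u₀‖ * ‖f‖ := norm_inner_le_norm _ _
  have h3 : ‖⟪u₁, f⟫_ℂ‖ ≤ ‖u₁‖ * ‖f‖ := norm_inner_le_norm _ _
  have h4 : (0:ℝ) ≤ ‖u₀‖ := norm_nonneg _
  have h5 : (0:ℝ) ≤ ‖u₁‖ := norm_nonneg _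
  nlinarith [norm_nonneg f]

/-- The operators `S_φ` and `S_Ψ` are self-adjoint, strictly positive
(hence invertible), with `‖S_φ‖ ≤ ‖φ₀‖² + ‖φ₁‖²` and `‖S_Ψ‖ ≤ ‖Ψ₀‖² + ‖Ψ₁‖²`
(operator norm on ℂ²). -/
theorem stmt5 (a b Sφ SΨ : Matrix (Fin 2) (Fin 2) ℂ)
    (hab : a * b + b * a = 1) (ha2 : a * a = 0) (hb2 : b * b = 0)
    (φ₀ Ψ₀ : EuclideanSpace ℂ (Fin 2))
    (hvacφ : act a φ₀ = 0) (hvacΨ : act bᴴ Ψ₀ = 0)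
    (hnorm : ⟪φ₀, Ψ₀⟫_ℂ = 1)
    (hSφ : ∀ f, act Sφ f = ⟪φ₀, f⟫_ℂ • φ₀ + ⟪act b φ₀, f⟫_ℂ • act b φ₀)
    (hSΨ : ∀ f, act SΨ f = ⟪Ψ₀, f⟫_ℂ • Ψ₀ + ⟪act aᴴ Ψ₀, f⟫_ℂ • act aᴴ Ψ₀) :
    Sφ.IsHermitian ∧ SΨ.IsHermitian ∧ Sφ.PosDef ∧ SΨ.PosDef ∧
    IsUnit Sφ ∧ IsUnit SΨ ∧
    ‖Matrix.toEuclideanCLM (𝕜 := ℂ) Sφ‖ ≤ ‖φ₀‖ ^ 2 + ‖act b φ₀‖ ^ 2 ∧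
    ‖Matrix.toEuclideanCLM (𝕜 := ℂ) SΨ‖ ≤ ‖Ψ₀‖ ^ 2 + ‖act aᴴ Ψ₀‖ ^ 2 := by
  set φ₁ := act b φ₀ with hφ₁
  set Ψ₁ := act aᴴ Ψ₀ with hΨ₁
  have hab' : a * b = 1 - b * a := eq_sub_of_add_eq hab
  -- biorthogonality
  have hA : ⟪φ₀, Ψ₁⟫_ℂ = 0 := by
    rw [hΨ₁, inner_act, conjTranspose_conjTranspose, hvacφ, inner_zero_left]
  have hB : ⟪φ₁, Ψ₀⟫_ℂ = 0 := by
    rw [hφ₁, inner_act', hvacΨ, inner_zero_right]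
  have hC : ⟪φ₁, Ψ₁⟫_ℂ = 1 := by
    rw [hΨ₁, inner_act, conjTranspose_conjTranspose, hφ₁]
    have : act a (act b φ₀) = φ₀ := by
      rw [← act_mul, hab']
      show (WithLp.toLp 2 ((1 - b * a) *ᵥ (φ₀ : Fin 2 → ℂ)) : EuclideanSpace ℂ (Fin 2)) = φ₀
      rw [Matrix.sub_mulVec, Matrix.one_mulVec, ← Matrix.mulVec_mulVec]
      have : (a *ᵥ (φ₀ : Fin 2 → ℂ)) = 0 := congrArg WithLp.ofLp hvacφ
      rw [this, Matrix.mulVec_zero]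
      show φ₀ - 0 = φ₀
      simp
    rw [this, hnorm]
  have kφ := key φ₀ φ₁ Ψ₀ Ψ₁ Sφ
    (by rw [← inner_conj_symm, hnorm]; simp)
    (by rw [← inner_conj_symm, hB]; simp)
    (by rw [← inner_conj_symm, hA]; simp)
    (by rw [← inner_conj_symm, hC]; simp)
    hSφ
  have kΨ := key Ψ₀ Ψ₁ φ₀ φ₁ SΨ hnorm hA hB hC hSΨ
  exact ⟨kφ.1.1, kΨ.1.1, kφ.1, kΨ.1, kφ.2.1, kΨ.2.1, kφ.2.2, kΨ.2.2⟩
end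
end

section
/- (Theorem 1, second part.) Let a and b be operators on ℂ² satisfying ab + ba = 1, a² = 0, b² = 0, and suppose there exist nonzero vectors φ₀, Ψ₀ ∈ ℂ² with aφ₀ = 0 and b*Ψ₀ = 0. Then there exist an operator c on ℂ² with cc* + c*c = 1 and c² = 0, and a self-adjoint strictly positive (positive definite) operator T on ℂ², such that a = T c T⁻¹ and b = T c* T⁻¹. -/
/-!
A vacuum `φ` of `a` and the vector `b φ` form a basis of `ℂ²` (apply `a`, using `ab + ba = 1`),
in which `a` and `b` become `c₀ = !![0, 1; 0, 0]` and `c₀*`: so `a = S c₀ S⁻¹`, `b = S c₀* S⁻¹`.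
The polar decomposition `S = T U`, with `T = (S S*)^{1/2}` positive definite and `U` unitary,
rewrites this as `a = T c T⁻¹`, `b = T c* T⁻¹` for `c = U c₀ U*`, which is again a fermion
operator because conjugation by a unitary is a ⋆-automorphism.
-/

open Matrix
open scoped InnerProductSpace ComplexOrder

noncomputable section

def IsFermion {R : Type*} [Semiring R] [Star R] (c : R) : Prop :=
  c * star c + star c * c = 1 ∧ c * c = 0

theorem IsFermion.map {R R' F : Type*} [Semiring R] [Star R] [Semiring R'] [Star R']
    [FunLike F R R'] [RingHomClass F R R'] [StarHomClass F R R'] (f : F) {c : R}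
    (hc : IsFermion c) : IsFermion (f c) := by
  simp only [IsFermion, ← map_star f, ← map_mul, ← map_add, hc.1, hc.2, map_one, map_zero,
    and_self]

open scoped MatrixOrder in
theorem Matrix.exists_posDef_mul_mem_unitaryGroup {n 𝕜 : Type*} [Fintype n] [DecidableEq n]
    [RCLike 𝕜] {S : Matrix n n 𝕜} (hS : IsUnit S) :
    ∃ T U, T.PosDef ∧ U ∈ unitaryGroup n 𝕜 ∧ S = T * U := by
  have hSS : (S * Sᴴ).PosDef :=
    .mul_conjTranspose_self S (vecMul_injective_iff_isUnit.mpr hS)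
  set T := CFC.sqrt (S * Sᴴ)
  have hT : T.PosDef := (hSS.isStrictlyPositive.sqrt).posDef
  have hTT : T * T = S * Sᴴ := CFC.sqrt_mul_sqrt_self _ hSS.posSemidef.nonneg
  have hTdet : IsUnit T.det := (isUnit_iff_isUnit_det T).mp hT.isUnit
  refine ⟨T, T⁻¹ * S, hT, ?_, (mul_nonsing_inv_cancel_left (A := T) S hTdet).symm⟩
  rw [mem_unitaryGroup_iff, star_eq_conjTranspose, conjTranspose_mul, conjTranspose_nonsing_inv,
    hT.isHermitian.eq]
  calc T⁻¹ * S * (Sᴴ * T⁻¹) = T⁻¹ * (T * T) * T⁻¹ := by rw [hTT]; simp only [Matrix.mul_assoc]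
    _ = 1 := by rw [nonsing_inv_mul_cancel_left (A := T) T hTdet, mul_nonsing_inv _ hTdet]

theorem IsFermion.exists_posDef_conj {n 𝕜 : Type*} [Fintype n] [DecidableEq n] [RCLike 𝕜]
    {S c₀ : Matrix n n 𝕜} (hS : IsUnit S) (hc₀ : IsFermion c₀) :
    ∃ c T, IsFermion c ∧ T.PosDef ∧
      S * c₀ * S⁻¹ = T * c * T⁻¹ ∧ S * c₀ᴴ * S⁻¹ = T * cᴴ * T⁻¹ := by
  obtain ⟨T, U, hT, hU, rfl⟩ := Matrix.exists_posDef_mul_mem_unitaryGroup hS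
  let conjU := Unitary.conjStarAlgAut 𝕜 _ ⟨U, hU⟩
  have hconj : ∀ m, T * U * m * (T * U)⁻¹ = T * conjU m * T⁻¹ := by
    intro m
    rw [Matrix.mul_inv_rev, inv_eq_left_inv (mem_unitaryGroup_iff'.mp hU)]
    simp only [conjU, Unitary.conjStarAlgAut_apply, Matrix.mul_assoc]
  refine ⟨conjU c₀, T, hc₀.map conjU, hT, hconj c₀, ?_⟩
  rw [hconj, ← star_eq_conjTranspose, map_star]; rfl

namespace Matrix

theorem conjTranspose_finTwo_annihilator {R : Type*} [Semiring R] [StarRing R] :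
    !![(0 : R), 1; 0, 0]ᴴ = !![0, 0; 1, 0] := by
  ext i j; fin_cases i <;> fin_cases j <;> simp

theorem isFermion_finTwo_annihilator {R : Type*} [Semiring R] [StarRing R] :
    IsFermion !![(0 : R), 1; 0, 0] := by
  rw [IsFermion, star_eq_conjTranspose, conjTranspose_finTwo_annihilator]
  constructor <;> ext i j <;> fin_cases i <;> fin_cases j <;> simp

theorem exists_finTwo_conj_of_anticomm {K : Type*} [Field K] {a b : Matrix (Fin 2) (Fin 2) K}
    (hab : a * b + b * a = 1) (hb2 : b * b = 0) {φ : Fin 2 → K} (hφ : φ ≠ 0) (haφ : a *ᵥ φ = 0) :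
    ∃ S, IsUnit S ∧ a = S * !![0, 1; 0, 0] * S⁻¹ ∧ b = S * !![0, 0; 1, 0] * S⁻¹ := by
  set ψ := b *ᵥ φ
  have haψ : a *ᵥ ψ = φ := by
    rw [mulVec_mulVec, eq_sub_of_add_eq hab, sub_mulVec, ← mulVec_mulVec, haφ, mulVec_zero,
      one_mulVec, sub_zero]
  have hbψ : b *ᵥ ψ = 0 := by rw [mulVec_mulVec, hb2, zero_mulVec]
  set S : Matrix (Fin 2) (Fin 2) K := (Matrix.of ![φ, ψ])ᵀ
  have hS : IsUnit S := by
    refine linearIndependent_cols_iff_isUnit.mp (LinearIndependent.pair_iff.mpr fun s t hst => ?_)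
    have htφ : t • φ = 0 := by
      simpa [mulVec_add, mulVec_smul, haφ, haψ] using congrArg (a *ᵥ ·) hst
    have ht : t = 0 := (smul_eq_zero.mp htφ).resolve_right hφ
    subst ht
    simpa [hφ] using hst
  have hSdet := (isUnit_iff_isUnit_det S).mp hS
  have haS : a * S = S * !![0, 1; 0, 0] := by
    ext i j
    fin_cases j
    · simpa [S, Matrix.mul_apply, mulVec, dotProduct, Fin.sum_univ_two] using congrFun haφ i
    · simpa [S, Matrix.mul_apply, mulVec, dotProduct, Fin.sum_univ_two] using congrFun haψ i
  have hbφ : b *ᵥ φ = ψ := rfl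
  have hbS : b * S = S * !![0, 0; 1, 0] := by
    ext i j
    fin_cases j
    · simpa [S, Matrix.mul_apply, mulVec, dotProduct, Fin.sum_univ_two] using congrFun hbφ i
    · simpa [S, Matrix.mul_apply, mulVec, dotProduct, Fin.sum_univ_two] using congrFun hbψ i
  refine ⟨S, hS, ?_, ?_⟩
  · rw [← haS, mul_nonsing_inv_cancel_right (A := S) a hSdet]
  · rw [← hbS, mul_nonsing_inv_cancel_right (A := S) b hSdet]

end Matrix

theorem stmt10_general (a b : Matrix (Fin 2) (Fin 2) ℂ)
    (hab : a * b + b * a = 1) (hb2 : b * b = 0)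
    (φ₀ : EuclideanSpace ℂ (Fin 2)) (hφ₀ : φ₀ ≠ 0)
    (hvacφ : act a φ₀ = 0) :
    ∃ c T : Matrix (Fin 2) (Fin 2) ℂ,
      c * cᴴ + cᴴ * c = 1 ∧ c * c = 0 ∧
      T.IsHermitian ∧ T.PosDef ∧
      a = T * c * T⁻¹ ∧ b = T * cᴴ * T⁻¹ := by
  obtain ⟨S, hS, rfl, rfl⟩ := exists_finTwo_conj_of_anticomm hab hb2
    (φ := φ₀.ofLp) (by simpa using hφ₀) (congrArg WithLp.ofLp hvacφ)
  obtain ⟨c, T, hc, hT, ha, hb⟩ := isFermion_finTwo_annihilator.exists_posDef_conj hS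
  rw [conjTranspose_finTwo_annihilator] at hb
  exact ⟨c, T, hc.1, hc.2, hT.isHermitian, hT, ha, hb⟩

/-- Theorem 1, second part: any pseudo-fermion pair with nonzero vacua is
similar, via a self-adjoint positive definite `T`, to a fermion pair
`(c, c*)`: `a = T c T⁻¹` and `b = T c* T⁻¹`. -/
theorem stmt10 (a b : Matrix (Fin 2) (Fin 2) ℂ)
    (hab : a * b + b * a = 1) (ha2 : a * a = 0) (hb2 : b * b = 0)
    (φ₀ Ψ₀ : EuclideanSpace ℂ (Fin 2)) (hφ₀ : φ₀ ≠ 0) (hΨ₀ : Ψ₀ ≠ 0)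
    (hvacφ : act a φ₀ = 0) (hvacΨ : act bᴴ Ψ₀ = 0) :
    ∃ c T : Matrix (Fin 2) (Fin 2) ℂ,
      c * cᴴ + cᴴ * c = 1 ∧ c * c = 0 ∧
      T.IsHermitian ∧ T.PosDef ∧
      a = T * c * T⁻¹ ∧ b = T * cᴴ * T⁻¹ :=
  stmt10_general a b hab hb2 φ₀ hφ₀ hvacφ
end
end

section
/- Let a and b be operators on ℂ² satisfying ab + ba = 1, a² = 0, b² = 0, with vacua φ₀ (aφ₀ = 0) and Ψ₀ (b*Ψ₀ = 0) normalized by ⟨φ₀,Ψ₀⟩ = 1; set φ₁ := bφ₀, Ψ₁ := a*Ψ₀, S_Ψ f := ⟨Ψ₀,f⟩Ψ₀ + ⟨Ψ₁,f⟩Ψ₁, and let S_Ψ^{1/2} be the unique positive semidefinite square root of the positive definite operator S_Ψ. Then c := S_Ψ^{1/2} a S_Ψ^{-1/2} satisfies cc* + c*c = 1, c² = 0, and c* = S_Ψ^{1/2} b S_Ψ^{-1/2}. -/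
open Matrix
open scoped InnerProductSpace ComplexOrder

noncomputable section

/-!
On `Ψ₀` and `Ψ₁ = a* Ψ₀` the operators `a*` and `b*` act as raising and lowering operators
(`a* Ψ₁ = 0` from `a² = 0`, `b* Ψ₁ = Ψ₀` from `ab + ba = 1` and `b* Ψ₀ = 0`), and this is
exactly what makes `a* S_Ψ = S_Ψ b`. The lowering relations also force `Ψ₀, Ψ₁` to be linearly
independent (`Ψ₀ ≠ 0` as `⟨φ₀, Ψ₀⟩ = 1`), hence a basis of `ℂ²`, so `S_Ψ` and its square root
`R` are invertible. As `R` is Hermitian, `a* R² = R² b` says `(R a R⁻¹)* = R b R⁻¹`, and the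
relations for `c` are those of `a, b` conjugated by `R`.
-/

theorem act_eq_toEuclideanLin (A : Matrix (Fin 2) (Fin 2) ℂ) (x : EuclideanSpace ℂ (Fin 2)) :
    act A x = A.toEuclideanLin x :=
  rfl

theorem LinearIndependent.pair_of_map_eq {K V : Type*} [Field K] [AddCommGroup V] [Module K V]
    (T : V →ₗ[K] V) {x y : V} (hx : x ≠ 0) (hTx : T x = 0) (hTy : T y = x) :
    LinearIndependent K ![x, y] := by
  rw [LinearIndependent.pair_iff]
  intro s t hst
  have ht : t = 0 := by simpa [hTx, hTy, hx] using congrArg T hst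
  subst ht
  simpa [hx] using hst

namespace Matrix

variable {n 𝕜 : Type*} [Fintype n] [DecidableEq n] [RCLike 𝕜]

theorem inner_toEuclideanLin_right (A : Matrix n n 𝕜) (x y : EuclideanSpace 𝕜 n) :
    ⟪x, A.toEuclideanLin y⟫_𝕜 = ⟪Aᴴ.toEuclideanLin x, y⟫_𝕜 := by
  rw [toEuclideanLin_conjTranspose_eq_adjoint, LinearMap.adjoint_inner_left]

theorem isUnit_of_toEuclideanLin_eq_sum {S : Matrix n n 𝕜} {v : n → EuclideanSpace 𝕜 n}
    (hv : LinearIndependent 𝕜 v) (hS : ∀ f, S.toEuclideanLin f = ∑ i, ⟪v i, f⟫_𝕜 • v i) :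
    IsUnit S := by
  rw [isUnit_iff_isUnit_det, isUnit_iff_ne_zero, Ne, ← exists_mulVec_eq_zero_iff]
  rintro ⟨w, hw, hSw⟩
  have hcoef : ∀ i, ⟪v i, WithLp.toLp 2 w⟫_𝕜 = 0 := by
    refine Fintype.linearIndependent_iff.mp hv _ ?_
    rw [← hS]
    simp [toLpLin_apply, hSw]
  let b := basisOfLinearIndependentOfCardEqFinrank' v hv (by simp)
  apply hw
  simpa using InnerProductSpace.ext_inner_left_basis b (x := WithLp.toLp 2 w) (y := 0)
    (by simpa [b] using hcoef)

theorem toEuclideanLin_conjTranspose_of_anticomm {a b : Matrix n n 𝕜} {Ψ₀ : EuclideanSpace 𝕜 n}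
    (hab : a * b + b * a = 1) (hvac : bᴴ.toEuclideanLin Ψ₀ = 0) :
    bᴴ.toEuclideanLin (aᴴ.toEuclideanLin Ψ₀) = Ψ₀ := by
  have hab' : bᴴ * aᴴ + aᴴ * bᴴ = 1 := by
    simpa only [conjTranspose_add, conjTranspose_mul, conjTranspose_one] using
      congrArg conjTranspose hab
  simpa [add_mul, hvac] using congrArg (fun M : Matrix n n 𝕜 => M.toEuclideanLin Ψ₀) hab'

theorem conjTranspose_mul_eq_mul_of_ladder {a b S : Matrix n n 𝕜} {Ψ₀ Ψ₁ : EuclideanSpace 𝕜 n}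
    (ha₀ : aᴴ.toEuclideanLin Ψ₀ = Ψ₁) (ha₁ : aᴴ.toEuclideanLin Ψ₁ = 0)
    (hb₀ : bᴴ.toEuclideanLin Ψ₀ = 0) (hb₁ : bᴴ.toEuclideanLin Ψ₁ = Ψ₀)
    (hS : ∀ f, S.toEuclideanLin f = ⟪Ψ₀, f⟫_𝕜 • Ψ₀ + ⟪Ψ₁, f⟫_𝕜 • Ψ₁) :
    aᴴ * S = S * b := by
  refine toEuclideanLin.injective (LinearMap.ext fun f => ?_)
  simp [hS, ha₀, ha₁, inner_toEuclideanLin_right b, hb₀, hb₁]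

theorem conjTranspose_conj_eq_conj {R a b : Matrix n n 𝕜} (hR : R.IsHermitian)
    (hdet : IsUnit R.det) (h : aᴴ * (R * R) = R * R * b) :
    (R * a * R⁻¹)ᴴ = R * b * R⁻¹ := by
  calc (R * a * R⁻¹)ᴴ = R⁻¹ * (aᴴ * (R * R)) * R⁻¹ := by
        rw [conjTranspose_mul, conjTranspose_mul, conjTranspose_nonsing_inv, hR.eq]
        simp only [mul_assoc, mul_nonsing_inv_cancel_right _ _ hdet]
    _ = R * b * R⁻¹ := by
        rw [h]
        simp only [mul_assoc, nonsing_inv_mul_cancel_left _ _ hdet]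

theorem conj_mul_conj {R : Matrix n n 𝕜} (hdet : IsUnit R.det) (A B : Matrix n n 𝕜) :
    (R * A * R⁻¹) * (R * B * R⁻¹) = R * (A * B) * R⁻¹ := by
  simp only [mul_assoc, nonsing_inv_mul_cancel_left _ _ hdet]

end Matrix

theorem stmt11_general (a b SΨ R : Matrix (Fin 2) (Fin 2) ℂ)
    (hab : a * b + b * a = 1) (ha2 : a * a = 0)
    (φ₀ Ψ₀ : EuclideanSpace ℂ (Fin 2))
    (hvacΨ : act bᴴ Ψ₀ = 0)
    (hnorm : ⟪φ₀, Ψ₀⟫_ℂ = 1)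
    (hSΨ : ∀ f, act SΨ f = ⟪Ψ₀, f⟫_ℂ • Ψ₀ + ⟪act aᴴ Ψ₀, f⟫_ℂ • act aᴴ Ψ₀)
    (hR : R.PosSemidef) (hR2 : R * R = SΨ) :
    (R * a * R⁻¹) * (R * a * R⁻¹)ᴴ + (R * a * R⁻¹)ᴴ * (R * a * R⁻¹) = 1 ∧
    (R * a * R⁻¹) * (R * a * R⁻¹) = 0 ∧
    (R * a * R⁻¹)ᴴ = R * b * R⁻¹ := by
  simp only [act_eq_toEuclideanLin] at hvacΨ hSΨ
  set Ψ₁ := aᴴ.toEuclideanLin Ψ₀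
  have hb₁ : bᴴ.toEuclideanLin Ψ₁ = Ψ₀ := toEuclideanLin_conjTranspose_of_anticomm hab hvacΨ
  have ha₁ : aᴴ.toEuclideanLin Ψ₁ = 0 := by
    simpa [Ψ₁] using congrArg (fun M : Matrix (Fin 2) (Fin 2) ℂ => Mᴴ.toEuclideanLin Ψ₀) ha2
  have hΨ₀ : Ψ₀ ≠ 0 := by
    rintro rfl
    simp at hnorm
  have hSΨ_unit : IsUnit SΨ :=
    isUnit_of_toEuclideanLin_eq_sum (LinearIndependent.pair_of_map_eq _ hΨ₀ hvacΨ hb₁)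
      (by simpa [Fin.sum_univ_two] using hSΨ)
  have hRdet : IsUnit R.det := by
    rw [← hR2, isUnit_iff_isUnit_det, det_mul, IsUnit.mul_iff] at hSΨ_unit
    exact hSΨ_unit.1
  have hc : (R * a * R⁻¹)ᴴ = R * b * R⁻¹ :=
    conjTranspose_conj_eq_conj hR.isHermitian hRdet
      (hR2 ▸ conjTranspose_mul_eq_mul_of_ladder rfl ha₁ hvacΨ hb₁ hSΨ)
  refine ⟨?_, ?_, hc⟩
  · rw [hc, conj_mul_conj hRdet, conj_mul_conj hRdet, ← add_mul, ← mul_add, hab, mul_one,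
      mul_nonsing_inv _ hRdet]
  · rw [conj_mul_conj hRdet, ha2, mul_zero, zero_mul]

/-- With `S_Ψ^{1/2}` the positive semidefinite square root `R` of `S_Ψ`,
the operator `c = R a R⁻¹` is a fermion operator and `c* = R b R⁻¹`. -/
theorem stmt11 (a b SΨ R : Matrix (Fin 2) (Fin 2) ℂ)
    (hab : a * b + b * a = 1) (ha2 : a * a = 0) (hb2 : b * b = 0)
    (φ₀ Ψ₀ : EuclideanSpace ℂ (Fin 2))
    (hvacφ : act a φ₀ = 0) (hvacΨ : act bᴴ Ψ₀ = 0)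
    (hnorm : ⟪φ₀, Ψ₀⟫_ℂ = 1)
    (hSΨ : ∀ f, act SΨ f = ⟪Ψ₀, f⟫_ℂ • Ψ₀ + ⟪act aᴴ Ψ₀, f⟫_ℂ • act aᴴ Ψ₀)
    (hR : R.PosSemidef) (hR2 : R * R = SΨ) :
    (R * a * R⁻¹) * (R * a * R⁻¹)ᴴ + (R * a * R⁻¹)ᴴ * (R * a * R⁻¹) = 1 ∧
    (R * a * R⁻¹) * (R * a * R⁻¹) = 0 ∧
    (R * a * R⁻¹)ᴴ = R * b * R⁻¹ :=
  stmt11_general a b SΨ R hab ha2 φ₀ Ψ₀ hvacΨ hnorm hSΨ hR hR2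
end
end

section
/- Let a, b, c ∈ ℂ and H := [[a, b], [c, −a]] be a traceless 2×2 complex matrix. If there exists a self-adjoint, positive definite 2×2 matrix S such that S H = H* S, then 2·Re(a)·Im(a) + Im(b·c) = 0. -/
open Matrix
open scoped ComplexOrder

noncomputable section

/-- If a traceless `H = [[a,b],[c,−a]]` admits a self-adjoint positive
definite metric `S` with `S H = H* S`, then
`2 Re(a) Im(a) + Im(b c) = 0`. -/
theorem stmt19 (a b c : ℂ) (S : Matrix (Fin 2) (Fin 2) ℂ)
    (hS : S.IsHermitian) (hSpos : S.PosDef)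
    (hint : S * !![a, b; c, -a] = !![a, b; c, -a]ᴴ * S) :
    2 * a.re * a.im + (b * c).im = 0 := by
  have hdet := congrArg Matrix.det hint
  rw [Matrix.det_mul, Matrix.det_mul, Matrix.det_conjTranspose] at hdet
  have hSdet : S.det ≠ 0 := ne_of_gt hSpos.det_pos
  have h : (!![a, b; c, -a]).det = star (!![a, b; c, -a]).det := by
    rw [mul_comm (star _)] at hdet
    exact mul_left_cancel₀ hSdet hdet
  rw [Matrix.det_fin_two_of] at h
  have him : (a * -a - b * c).im = 0 := by
    have h2 := congrArg Complex.im h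
    simp only [Complex.star_def, Complex.conj_im] at h2
    linarith
  simp [Complex.sub_im, Complex.mul_im, Complex.mul_im] at him ⊢
  ring_nf at him ⊢
  linarith
end
end
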